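/- arXiv:2107.14384 — 4 statements merged into one kernel-verified Lean document; each statement's English description precedes it below -/
import Mathlib

section
/- Let (E, ρ) be a Polish space (a complete separable metric space) equipped with its Borel σ-algebra, let (Ω, F, P) be a probability space, and let Z_n : Ω → E (n = 1, 2, ...) be measurable maps. Then the following are equivalent: (a) there exists a measurable Z : Ω → E such that Z_n converges to Z in probability, i.e. for every ε > 0, P(ρ(Z_n, Z) > ε) → 0 as n → ∞; (b) for every pair of strictly increasing sequences of indices l(·) and m(·) there exist a strictly increasing sequence k ↦ (l(k), m(k)) of corresponding indices and a probability measure μ on E × E, concentrated on the diagonal {(x, y) ∈ E × E : x = y} (i.e. μ of the diagonal equals 1), such that the laws of the pairs (Z_{l(k)}, Z_{m(k)}) converge weakly to μ as k → ∞. -/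
open MeasureTheory Filter Topology
open scoped ENNReal NNReal

/-- Lemma 1.1: convergence in probability of `Z n` to some random element of a Polish
space `E` is equivalent to: for every pair of subsequences there is a further subsequence
along which the laws of the pairs converge weakly to a measure supported on the diagonal. -/
theorem stmt_0
    {E : Type*} [MetricSpace E] [CompleteSpace E] [TopologicalSpace.SeparableSpace E]
    [MeasurableSpace E] [BorelSpace E]
    {Ω : Type*} [MeasurableSpace Ω] (P : Measure Ω) [IsProbabilityMeasure P]
    (Z : ℕ → Ω → E) (hZ : ∀ n, Measurable (Z n)) :
    (∃ Zlim : Ω → E, Measurable Zlim ∧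
      ∀ ε : ℝ, 0 < ε →
        Tendsto (fun n => P {ω | ε < dist (Z n ω) (Zlim ω)}) atTop (𝓝 0)) ↔
    (∀ l m : ℕ → ℕ, StrictMono l → StrictMono m →
      ∃ (φ : ℕ → ℕ) (μ : Measure (E × E)), StrictMono φ ∧ IsProbabilityMeasure μ ∧
        μ {p : E × E | p.1 = p.2} = 1 ∧
        ∀ g : BoundedContinuousFunction (E × E) ℝ,
          Tendsto
            (fun k => ∫ p, g p ∂(P.map (fun ω => (Z (l (φ k)) ω, Z (m (φ k)) ω))))
            atTop (𝓝 (∫ p, g p ∂μ))) := by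
  have hdiagmeas : MeasurableSet {p : E × E | p.1 = p.2} :=
    (isClosed_eq continuous_fst continuous_snd).measurableSet
  constructor
  · rintro ⟨Zlim, hmeas, hconv⟩ l m hl hm
    have hTIM : TendstoInMeasure P Z atTop Zlim := by
      rw [tendstoInMeasure_iff_dist]; intro ε hε
      refine tendsto_of_tendsto_of_tendsto_of_le_of_le tendsto_const_nhds
        (hconv (ε / 2) (by linarith)) (fun n => zero_le) (fun n => measure_mono ?_)
      intro ω hω
      simp only [Set.mem_setOf_eq] at *
      linarith
    have hTIMl : TendstoInMeasure P (fun k => Z (l k)) atTop Zlim :=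
      fun ε hε => (hTIM ε hε).comp hl.tendsto_atTop
    obtain ⟨ns₁, hns₁, hae₁⟩ := hTIMl.exists_seq_tendsto_ae
    have hTIMm : TendstoInMeasure P (fun k => Z (m (ns₁ k))) atTop Zlim :=
      fun ε hε => (hTIM ε hε).comp (hm.comp hns₁).tendsto_atTop
    obtain ⟨ns₂, hns₂, hae₂⟩ := hTIMm.exists_seq_tendsto_ae
    set φ : ℕ → ℕ := ns₁ ∘ ns₂ with hφdef
    have hφ : StrictMono φ := hns₁.comp hns₂
    have hpm : Measurable fun ω => (Zlim ω, Zlim ω) := hmeas.prodMk hmeas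
    refine ⟨φ, P.map (fun ω => (Zlim ω, Zlim ω)), hφ,
      Measure.isProbabilityMeasure_map hpm.aemeasurable, ?_, ?_⟩
    · rw [Measure.map_apply hpm hdiagmeas]
      simp [measure_univ (μ := P)]
    · intro g
      have hae₁' : ∀ᵐ ω ∂P, Tendsto (fun k => Z (l (φ k)) ω) atTop (𝓝 (Zlim ω)) := by
        filter_upwards [hae₁] with ω hω
        exact hω.comp hns₂.tendsto_atTop
      have hmk : ∀ k, Measurable fun ω => (Z (l (φ k)) ω, Z (m (φ k)) ω) :=
        fun k => (hZ _).prodMk (hZ _)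
      have heq : ∀ k, ∫ p, g p ∂(P.map (fun ω => (Z (l (φ k)) ω, Z (m (φ k)) ω)))
          = ∫ ω, g (Z (l (φ k)) ω, Z (m (φ k)) ω) ∂P :=
        fun k => integral_map (hmk k).aemeasurable g.continuous.aestronglyMeasurable
      have heq' : ∫ p, g p ∂(P.map (fun ω => (Zlim ω, Zlim ω)))
          = ∫ ω, g (Zlim ω, Zlim ω) ∂P :=
        integral_map hpm.aemeasurable g.continuous.aestronglyMeasurable
      simp only [heq, heq']
      refine tendsto_integral_of_dominated_convergence (fun _ => ‖g‖)
        (fun k => (g.continuous.comp_aestronglyMeasurable (hmk k).aestronglyMeasurable))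
        (integrable_const _)
        (fun k => Eventually.of_forall fun ω => g.norm_coe_le_norm _) ?_
      filter_upwards [hae₁', hae₂] with ω h1 h2
      exact ((g.continuous.tendsto _).comp (h1.prodMk_nhds h2))
  · intro h
    -- Step A: the sequence is Cauchy in probability
    have hC : ∀ ε : ℝ, 0 < ε → ∀ δ : ℝ≥0∞, 0 < δ →
        ∃ N, ∀ p, N ≤ p → ∀ q, N ≤ q → P {ω | ε < dist (Z p ω) (Z q ω)} ≤ δ := by
      by_contra hcon
      push_neg at hcon
      obtain ⟨ε, hε, δ, hδ, hall⟩ := hcon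
      choose p hp q hq hbig using hall
      set f : ℕ → ℕ := fun k => Nat.rec 0 (fun _ fk => max (p fk) (q fk) + 1) k with hfdef
      have hf : ∀ k, f (k + 1) = max (p (f k)) (q (f k)) + 1 := fun k => rfl
      set l : ℕ → ℕ := fun k => p (f k) with hldef
      set m : ℕ → ℕ := fun k => q (f k) with hmdef
      have hl : StrictMono l := by
        apply strictMono_nat_of_lt_succ
        intro k
        have h1 : l k < f (k + 1) := by
          rw [hf k]; exact Nat.lt_succ_of_le (le_max_left _ _)
        exact h1.trans_le (hp (f (k + 1)))
      have hm : StrictMono m := by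
        apply strictMono_nat_of_lt_succ
        intro k
        have h1 : m k < f (k + 1) := by
          rw [hf k]; exact Nat.lt_succ_of_le (le_max_right _ _)
        exact h1.trans_le (hq (f (k + 1)))
      obtain ⟨φ, μ, hφ, hμprob, hdiag, hweak⟩ := h l m hl hm
      set F : Set (E × E) := {p | ε ≤ dist p.1 p.2} with hFdef
      have hFclosed : IsClosed F := isClosed_le continuous_const continuous_dist
      have hpairmeas : ∀ k, Measurable fun ω => (Z (l (φ k)) ω, Z (m (φ k)) ω) :=
        fun k => (hZ _).prodMk (hZ _)
      haveI hinst : ∀ k, IsProbabilityMeasure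
          (P.map (fun ω => (Z (l (φ k)) ω, Z (m (φ k)) ω))) :=
        fun k => Measure.isProbabilityMeasure_map (hpairmeas k).aemeasurable
      set μs : ℕ → ProbabilityMeasure (E × E) :=
        fun k => ⟨P.map (fun ω => (Z (l (φ k)) ω, Z (m (φ k)) ω)), hinst k⟩ with hμsdef
      set μ' : ProbabilityMeasure (E × E) := ⟨μ, hμprob⟩ with hμ'def
      have htend : Tendsto μs atTop (𝓝 μ') :=
        ProbabilityMeasure.tendsto_iff_forall_integral_tendsto.mpr fun g => hweak g
      have hlimsup := ProbabilityMeasure.limsup_measure_closed_le_of_tendsto htend hFclosed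
      have hμF : (μ' : Measure (E × E)) F = 0 := by
        have hsub : F ⊆ {p : E × E | p.1 = p.2}ᶜ := by
          intro x hx
          simp only [Set.mem_compl_iff, Set.mem_setOf_eq]
          intro heq
          rw [hFdef, Set.mem_setOf_eq, heq, dist_self] at hx
          linarith
        have hcompl : μ {p : E × E | p.1 = p.2}ᶜ = 0 := by
          rw [measure_compl hdiagmeas (measure_ne_top μ _), hdiag]
          simp
        exact le_antisymm ((measure_mono hsub).trans hcompl.le) zero_le
      have hlow : ∀ k, δ ≤ (μs k : Measure (E × E)) F := by
        intro k
        have hFm : (μs k : Measure (E × E)) F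
            = P {ω | ε ≤ dist (Z (l (φ k)) ω) (Z (m (φ k)) ω)} := by
          show (P.map (fun ω => (Z (l (φ k)) ω, Z (m (φ k)) ω))) F = _
          rw [Measure.map_apply (hpairmeas k) hFclosed.measurableSet]
          rfl
        rw [hFm]
        refine le_trans (hbig (f (φ k))).le (measure_mono ?_)
        intro ω hω
        simp only [Set.mem_setOf_eq] at hω ⊢
        exact hω.le
      have hcontr : δ ≤ 0 := by
        calc δ = limsup (fun _ : ℕ => δ) atTop := (limsup_const δ).symm
          _ ≤ limsup (fun k => (μs k : Measure (E × E)) F) atTop :=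
            limsup_le_limsup (Eventually.of_forall hlow)
          _ ≤ (μ' : Measure (E × E)) F := hlimsup
          _ = 0 := hμF
      exact absurd hcontr (not_le.mpr hδ)
    -- Step B: construct the limit from Cauchyness in probability
    have hN : ∀ k : ℕ, ∃ N, ∀ p, N ≤ p → ∀ q, N ≤ q →
        P {ω | (2⁻¹ : ℝ) ^ k < dist (Z p ω) (Z q ω)} ≤ (2⁻¹ : ℝ≥0∞) ^ k := by
      intro k
      refine hC _ (by positivity) _ ?_
      exact ENNReal.pow_pos (ENNReal.inv_pos.mpr (by norm_num)) k
    choose N₀ hN₀ using hN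
    set n : ℕ → ℕ := fun k => Nat.rec (N₀ 0) (fun k nk => max (N₀ (k + 1)) (nk + 1)) k
      with hndef
    have hn_succ : ∀ k, n (k + 1) = max (N₀ (k + 1)) (n k + 1) := fun k => rfl
    have hn_mono : StrictMono n := by
      apply strictMono_nat_of_lt_succ
      intro k
      rw [hn_succ k]
      exact lt_of_lt_of_le (Nat.lt_succ_self _) (le_max_right _ _)
    have hnge : ∀ k, N₀ k ≤ n k := by
      intro k
      cases k with
      | zero => exact le_refl _
      | succ k => rw [hn_succ k]; exact le_max_left _ _
    have hkey : ∀ k, P {ω | (2⁻¹ : ℝ) ^ k < dist (Z (n k) ω) (Z (n (k + 1)) ω)}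
        ≤ (2⁻¹ : ℝ≥0∞) ^ k :=
      fun k => hN₀ k (n k) (hnge k) (n (k + 1))
        ((hnge k).trans (hn_mono (Nat.lt_succ_self k)).le)
    have hsum : (∑' k, P {ω | (2⁻¹ : ℝ) ^ k < dist (Z (n k) ω) (Z (n (k + 1)) ω)}) ≠ ∞ := by
      refine ne_top_of_le_ne_top ?_ (ENNReal.tsum_le_tsum hkey)
      rw [ENNReal.tsum_geometric]
      refine ENNReal.inv_ne_top.mpr ?_
      intro h0
      have h12 : (2⁻¹ : ℝ≥0∞) < 1 := by
        rw [ENNReal.inv_lt_one]; norm_num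
      rw [tsub_eq_zero_iff_le] at h0
      exact absurd h0 (not_le.mpr h12)
    have haelim : ∀ᵐ ω ∂P, ∃ c, Tendsto (fun k => Z (n k) ω) atTop (𝓝 c) := by
      filter_upwards [ae_eventually_notMem hsum] with ω hω
      obtain ⟨K, hK⟩ := eventually_atTop.mp hω
      have hdist : ∀ k, K ≤ k →
          dist (Z (n k) ω) (Z (n (k + 1)) ω) ≤ (2⁻¹ : ℝ) ^ k := by
        intro k hk
        have := hK k hk
        simpa [Set.mem_setOf_eq, not_lt] using this
      have hcau : CauchySeq (fun k => Z (n k) ω) := by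
        apply cauchySeq_of_summable_dist
        rw [← summable_nat_add_iff K]
        refine Summable.of_nonneg_of_le (fun k => dist_nonneg)
          (fun k => hdist (k + K) (Nat.le_add_left K k)) ?_
        simp_rw [pow_add]
        exact (summable_geometric_of_lt_one (by norm_num) (by norm_num)).mul_right _
      exact cauchySeq_tendsto_of_complete hcau
    obtain ⟨Zlim, hZlimmeas, hZlimtendsto⟩ :=
      measurable_limit_of_tendsto_metrizable_ae (fun k => (hZ (n k)).aemeasurable) haelim
    refine ⟨Zlim, hZlimmeas, ?_⟩
    have hsubTIM : TendstoInMeasure P (fun k => Z (n k)) atTop Zlim :=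
      tendstoInMeasure_of_tendsto_ae (fun k => (hZ (n k)).aestronglyMeasurable) hZlimtendsto
    intro ε hε
    rw [ENNReal.tendsto_atTop_zero]
    intro δ hδ
    obtain ⟨K₁, hK₁⟩ := ENNReal.tendsto_atTop_zero.mp (tendstoInMeasure_iff_dist.mp hsubTIM (ε / 2) (by linarith))
      (δ / 2) (ENNReal.half_pos hδ.ne' )
    obtain ⟨K₂, hK₂⟩ := hC (ε / 2) (by linarith) (δ / 2) (ENNReal.half_pos hδ.ne')
    refine ⟨max K₁ K₂, fun j hj => ?_⟩
    set k := max K₁ K₂ with hkdef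
    have hsplit : {ω | ε < dist (Z j ω) (Zlim ω)}
        ⊆ {ω | ε / 2 < dist (Z j ω) (Z (n k) ω)}
          ∪ {ω | ε / 2 ≤ dist (Z (n k) ω) (Zlim ω)} := by
      intro ω hω
      simp only [Set.mem_union, Set.mem_setOf_eq] at *
      by_contra hcon
      push_neg at hcon
      obtain ⟨h1, h2⟩ := hcon
      have := dist_triangle (Z j ω) (Z (n k) ω) (Zlim ω)
      linarith
    calc P {ω | ε < dist (Z j ω) (Zlim ω)}
        ≤ P ({ω | ε / 2 < dist (Z j ω) (Z (n k) ω)}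
          ∪ {ω | ε / 2 ≤ dist (Z (n k) ω) (Zlim ω)}) := measure_mono hsplit
      _ ≤ P {ω | ε / 2 < dist (Z j ω) (Z (n k) ω)}
          + P {ω | ε / 2 ≤ dist (Z (n k) ω) (Zlim ω)} := measure_union_le _ _
      _ ≤ δ / 2 + δ / 2 := by
          refine add_le_add ?_ (hK₁ k (le_max_left _ _))
          refine hK₂ j (le_trans (le_max_right _ _) hj) (n k) ?_
          exact le_trans (le_max_right K₁ K₂) (hn_mono.le_apply)
      _ = δ := ENNReal.add_halves δ
end

section
/- Let t > 0 and 0 < ε ≤ K, let a be a symmetric d×d real matrix with εt·I ≤ a ≤ Kt·I in the Loewner order, and let a₁ be a symmetric positive semidefinite d×d real matrix. Then for every z ∈ ℝ^d, (det(a + a₁))^{−1/2} exp(−⟨(a + a₁)^{−1} z, z⟩ / 2) ≤ (K/ε)^{d/2} (det(Kt·I + a₁))^{−1/2} exp(−⟨(Kt·I + a₁)^{−1} z, z⟩ / 2). -/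
open MeasureTheory Filter Topology

open Matrix

variable {n : Type*} [Fintype n] [DecidableEq n]

lemma psd_smul {Q : Matrix n n ℝ} (hQ : Q.PosSemidef) {c : ℝ} (hc : 0 ≤ c) :
    (c • Q).PosSemidef := by
  refine ⟨?_, fun x => ?_⟩
  · unfold Matrix.IsHermitian
    rw [conjTranspose_smul, hQ.1]
    simp
  · exact (hQ.smul hc).2 x

lemma one_le_det_one_add {M : Matrix n n ℝ} (hM : M.PosSemidef) :
    1 ≤ (1 + M).det := by
  set U : Matrix n n ℝ := (Matrix.IsHermitian.eigenvectorUnitary hM.1 : Matrix n n ℝ)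
  have hU : U * star U = 1 := Matrix.mem_unitaryGroup_iff.mp (Matrix.IsHermitian.eigenvectorUnitary hM.1).2
  have hM' : M = U * diagonal (RCLike.ofReal ∘ hM.1.eigenvalues) * star U :=
    hM.1.spectral_theorem
  have key : 1 + M = U * (1 + diagonal (RCLike.ofReal ∘ hM.1.eigenvalues)) * star U := by
    rw [mul_add, add_mul, mul_one, hU, ← hM']
  rw [key, det_mul, det_mul, mul_comm, ← mul_assoc, mul_comm (det (star U)), ← det_mul, hU, det_one, one_mul]
  have : (1 : Matrix n n ℝ) + diagonal (RCLike.ofReal ∘ hM.1.eigenvalues)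
      = diagonal (fun i => 1 + hM.1.eigenvalues i) := by
    rw [← diagonal_one, diagonal_add]
    congr 1
  rw [this, det_diagonal]
  calc (1:ℝ) = ∏ _i : n, (1:ℝ) := by simp
    _ ≤ ∏ i : n, (1 + hM.1.eigenvalues i) :=
      Finset.prod_le_prod (fun i _ => by norm_num)
        (fun i _ => by linarith [hM.eigenvalues_nonneg i])

open scoped MatrixOrder in
lemma det_le_det_add {P Q : Matrix n n ℝ} (hP : P.PosDef) (hQ : Q.PosSemidef) :
    P.det ≤ (P + Q).det := by
  set S := CFC.sqrt P with hSdef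
  have hS : S.PosSemidef := (CFC.sqrt_nonneg P).posSemidef
  have hSS : S * S = P := CFC.sqrt_mul_sqrt_self P hP.posSemidef.nonneg
  have hdetS : S.det * S.det = P.det := by rw [← det_mul, hSS]
  have hdetSne : IsUnit S.det := by
    have hp := hP.det_pos
    have : S.det ≠ 0 := by intro h; rw [h, zero_mul] at hdetS; linarith
    exact this.isUnit
  have hSinv : S * S⁻¹ = 1 := mul_nonsing_inv S hdetSne
  have hSinv' : S⁻¹ * S = 1 := nonsing_inv_mul S hdetSne
  have hSinvH : (S⁻¹)ᴴ = S⁻¹ := hS.1.inv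
  have hMpsd : ((S⁻¹)ᴴ * Q * S⁻¹).PosSemidef := hQ.conjTranspose_mul_mul_same S⁻¹
  rw [hSinvH] at hMpsd
  have key : P + Q = S * (1 + S⁻¹ * Q * S⁻¹) * S := by
    rw [mul_add, mul_one, add_mul, hSS, ← mul_assoc, ← mul_assoc, hSinv, one_mul, mul_assoc, hSinv', mul_one]
  calc P.det = S.det * 1 * S.det := by rw [mul_one, hdetS]
    _ ≤ S.det * (1 + S⁻¹ * Q * S⁻¹).det * S.det := by
        have h1 := one_le_det_one_add hMpsd
        nlinarith [hP.det_pos, hdetS]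
    _ = (P + Q).det := by rw [key, det_mul, det_mul]

lemma quad_antitone {A B : Matrix n n ℝ} (hA : A.PosDef) (hB : B.PosDef)
    (hBA : (B - A).PosSemidef) (z : n → ℝ) :
    dotProduct (B⁻¹ *ᵥ z) z ≤ dotProduct (A⁻¹ *ᵥ z) z := by
  have hAdet : IsUnit A.det := hA.det_pos.ne'.isUnit
  have hBdet : IsUnit B.det := hB.det_pos.ne'.isUnit
  set u := A⁻¹ *ᵥ z with hu
  set y := B⁻¹ *ᵥ z with hy
  have hAu : A *ᵥ u = z := by rw [hu, mulVec_mulVec, mul_nonsing_inv A hAdet, one_mulVec]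
  have hBy : B *ᵥ y = z := by rw [hy, mulVec_mulVec, mul_nonsing_inv B hBdet, one_mulVec]
  have hsym : Aᵀ = A := hA.1
  -- symmetric pairing
  have pair : ∀ v w : n → ℝ, dotProduct v (A *ᵥ w) = dotProduct (A *ᵥ v) w := by
    intro v w
    rw [dotProduct_mulVec, ← hsym, vecMul_transpose, hsym]
  have h1 : 0 ≤ dotProduct (y - u) (A *ᵥ (y - u)) := by
    have := hA.posSemidef.dotProduct_mulVec_nonneg (y - u)
    simpa using this
  have h2 : 0 ≤ dotProduct y ((B - A) *ᵥ y) := by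
    have := hBA.dotProduct_mulVec_nonneg y
    simpa using this
  have e1 : dotProduct (y - u) (A *ᵥ (y - u)) =
      dotProduct y (A *ᵥ y) - dotProduct y z - dotProduct z y + dotProduct u z := by
    rw [mulVec_sub, dotProduct_sub, sub_dotProduct, sub_dotProduct]
    have eu : dotProduct u (A *ᵥ y) = dotProduct z y := by rw [pair, hAu]
    have ey : dotProduct y (A *ᵥ u) = dotProduct y z := by rw [hAu]
    have euu : dotProduct u (A *ᵥ u) = dotProduct u z := by rw [hAu]
    rw [eu, ey, euu]
    ring
  have e2 : dotProduct y ((B - A) *ᵥ y) = dotProduct y z - dotProduct y (A *ᵥ y) := by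
    rw [sub_mulVec, dotProduct_sub, hBy]
  have hcomm1 : dotProduct y z = dotProduct z y := dotProduct_comm _ _
  have hcomm2 : dotProduct u z = dotProduct z u := dotProduct_comm _ _
  rw [e1] at h1
  rw [e2] at h2
  -- goal : y ⬝ᵥ z ≤ u ⬝ᵥ z
  linarith

/-- Comparison `p_a(x,y) ≤ r(x-y)` between the Gaussian kernel with covariance `a + a₁`
and (a multiple of) the Gaussian kernel with covariance `Kt·I + a₁`. -/
theorem stmt_6 (d : ℕ) (hd : 1 ≤ d) (t K ε : ℝ) (ht : 0 < t) (hε : 0 < ε) (hεK : ε ≤ K)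
    (a a₁ : Matrix (Fin d) (Fin d) ℝ) (ha : a.IsSymm)
    (h1 : (a - (ε * t) • (1 : Matrix (Fin d) (Fin d) ℝ)).PosSemidef)
    (h2 : ((K * t) • (1 : Matrix (Fin d) (Fin d) ℝ) - a).PosSemidef)
    (ha₁ : a₁.PosSemidef) :
    ∀ z : Fin d → ℝ,
      (a + a₁).det ^ (-(1 : ℝ) / 2) *
          Real.exp (-(dotProduct ((a + a₁)⁻¹.mulVec z) z) / 2)
        ≤ (K / ε) ^ ((d : ℝ) / 2) *
            ((K * t) • (1 : Matrix (Fin d) (Fin d) ℝ) + a₁).det ^ (-(1 : ℝ) / 2) *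
            Real.exp (-(dotProduct
              (((K * t) • (1 : Matrix (Fin d) (Fin d) ℝ) + a₁)⁻¹.mulVec z) z) / 2) := by
  intro z
  have : Nonempty (Fin d) := ⟨⟨0, hd⟩⟩
  set A : Matrix (Fin d) (Fin d) ℝ := a + a₁ with hAdef
  set B : Matrix (Fin d) (Fin d) ℝ := (K * t) • (1 : Matrix (Fin d) (Fin d) ℝ) + a₁ with hBdef
  set c : ℝ := K / ε with hcdef
  have hK : 0 < K := lt_of_lt_of_le hε hεK
  have hc0 : 0 < c := div_pos hK hε
  have hc1 : 1 ≤ c := (one_le_div hε).2 hεK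
  have pdεt : ((ε * t) • (1 : Matrix (Fin d) (Fin d) ℝ)).PosDef := by
    rw [smul_one_eq_diagonal]
    exact Matrix.posDef_diagonal_iff.2 fun _ => mul_pos hε ht
  have pdKt : ((K * t) • (1 : Matrix (Fin d) (Fin d) ℝ)).PosDef := by
    rw [smul_one_eq_diagonal]
    exact Matrix.posDef_diagonal_iff.2 fun _ => mul_pos hK ht
  have hA_pd : A.PosDef := by
    have : A = (ε * t) • (1 : Matrix (Fin d) (Fin d) ℝ)
        + ((a - (ε * t) • (1 : Matrix (Fin d) (Fin d) ℝ)) + a₁) := by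
      rw [hAdef]; abel
    rw [this]
    exact pdεt.add_posSemidef (h1.add ha₁)
  have hB_pd : B.PosDef := pdKt.add_posSemidef ha₁
  have hBA : (B - A).PosSemidef := by
    have : B - A = (K * t) • (1 : Matrix (Fin d) (Fin d) ℝ) - a := by
      rw [hAdef, hBdef]; abel
    rw [this]; exact h2
  have hct : c * (ε * t) = K * t := by rw [hcdef]; field_simp
  have hcAB : (c • A - B).PosSemidef := by
    have key : c • A - B = c • (a - (ε * t) • (1 : Matrix (Fin d) (Fin d) ℝ))
        + (c - 1) • a₁ := by
      rw [smul_sub, smul_smul, hct, sub_smul, one_smul, hAdef, hBdef, smul_add]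
      abel
    rw [key]
    exact (psd_smul h1 hc0.le).add (psd_smul ha₁ (by linarith))
  have hdet : B.det ≤ c ^ d * A.det := by
    calc B.det ≤ (B + (c • A - B)).det := det_le_det_add hB_pd hcAB
      _ = (c • A).det := by rw [add_sub_cancel]
      _ = c ^ d * A.det := by rw [det_smul, Fintype.card_fin]
  have hquad : dotProduct (B⁻¹ *ᵥ z) z ≤ dotProduct (A⁻¹ *ᵥ z) z :=
    quad_antitone hA_pd hB_pd hBA z
  have dApos : 0 < A.det := hA_pd.det_pos
  have dBpos : 0 < B.det := hB_pd.det_pos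
  set pA := A.det ^ ((1:ℝ)/2) with hpA
  set pB := B.det ^ ((1:ℝ)/2) with hpB
  set pc := c ^ ((d:ℝ)/2) with hpc
  have pApos : 0 < pA := Real.rpow_pos_of_pos dApos _
  have pBpos : 0 < pB := Real.rpow_pos_of_pos dBpos _
  have pcpos : 0 < pc := Real.rpow_pos_of_pos hc0 _
  have h5 : pB ≤ pc * pA := by
    calc pB ≤ (c ^ d * A.det) ^ ((1:ℝ)/2) :=
          Real.rpow_le_rpow dBpos.le hdet (by norm_num)
      _ = pc * pA := by
          rw [Real.mul_rpow (pow_nonneg hc0.le d) dApos.le, hpc, hpA,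
            ← Real.rpow_natCast c d, ← Real.rpow_mul hc0.le,
            show (d:ℝ) * (1/2) = (d:ℝ)/2 by ring]
  have hexpA : A.det ^ (-(1:ℝ)/2) = pA⁻¹ := by
    rw [hpA, ← Real.rpow_neg dApos.le]
    norm_num
  have hexpB : B.det ^ (-(1:ℝ)/2) = pB⁻¹ := by
    rw [hpB, ← Real.rpow_neg dBpos.le]
    norm_num
  have goal1 : A.det ^ (-(1:ℝ)/2) ≤ pc * B.det ^ (-(1:ℝ)/2) := by
    rw [hexpA, hexpB]
    calc pA⁻¹ = pB / (pA * pB) := by field_simp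
      _ ≤ (pc * pA) / (pA * pB) := by gcongr
      _ = pc * pB⁻¹ := by field_simp
  have goal2 : Real.exp (-(dotProduct (A⁻¹ *ᵥ z) z) / 2)
      ≤ Real.exp (-(dotProduct (B⁻¹ *ᵥ z) z) / 2) :=
    Real.exp_le_exp.2 (by linarith)
  calc A.det ^ (-(1:ℝ)/2) * Real.exp (-(dotProduct (A⁻¹ *ᵥ z) z) / 2)
      ≤ (pc * B.det ^ (-(1:ℝ)/2)) * Real.exp (-(dotProduct (B⁻¹ *ᵥ z) z) / 2) := by
        apply mul_le_mul goal1 goal2 (Real.exp_pos _).le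
        positivity
    _ = pc * B.det ^ (-(1:ℝ)/2) * Real.exp (-(dotProduct (B⁻¹ *ᵥ z) z) / 2) := by ring
end

section
/- Let d ≥ 1 be an integer and α ∈ (0, d) a real number. Then there is a constant N depending only on d and α (one may take N = 2/(d − α) + 2/α) such that for all t > 0 and γ > 0, ∫_0^t min( γ s^{−d/2} (t − s)^{α/2 − 1}, (t − s)^{α/2 − 1 − d/2} ) ds ≤ N t^{−(d − α)/2} (1 + γ^{2/d})^{(d − α)/2}. -/
open MeasureTheory Filter Topology

/-- The integral estimate
`∫_0^t min(γ s^{-d/2} (t-s)^{α/2-1}, (t-s)^{α/2-1-d/2}) ds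
  ≤ N t^{-(d-α)/2} (1 + γ^{2/d})^{(d-α)/2}`,
where one may take `N = 2/(d-α) + 2/α` (a constant depending only on `d` and `α`). -/
theorem stmt_12 (d : ℕ) (hd : 1 ≤ d) (α : ℝ) (hα0 : 0 < α) (hαd : α < d) :
    ∃ N : ℝ, N = 2 / ((d : ℝ) - α) + 2 / α ∧
      ∀ t : ℝ, 0 < t → ∀ γ : ℝ, 0 < γ →
        (∫ s in Set.Ioc (0 : ℝ) t,
            min (γ * s ^ (-(d : ℝ) / 2) * (t - s) ^ (α / 2 - 1))
              ((t - s) ^ (α / 2 - 1 - (d : ℝ) / 2)))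
          ≤ N * t ^ (-((d : ℝ) - α) / 2) *
              (1 + γ ^ (2 / (d : ℝ))) ^ (((d : ℝ) - α) / 2) := by
  have hD1 : (1:ℝ) ≤ (d:ℝ) := by exact_mod_cast hd
  have hD0 : (0:ℝ) < (d:ℝ) := lt_of_lt_of_le one_pos hD1
  have hDα : 0 < (d:ℝ) - α := by linarith
  refine ⟨2 / ((d : ℝ) - α) + 2 / α, rfl, ?_⟩
  intro t ht γ hγ
  set D : ℝ := (d:ℝ) with hDdef
  have hγp : 0 < γ ^ (2 / D) := Real.rpow_pos_of_pos hγ _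
  set A : ℝ := 1 + γ ^ (2 / D) with hAdef
  have hA0 : 0 < A := by positivity
  set u : ℝ := t * γ ^ (2 / D) / A with hudef
  have hu0 : 0 < u := by positivity
  have hut : u < t := by
    rw [hudef, div_lt_iff₀ hA0]
    nlinarith
  have htu0 : 0 < t - u := by linarith
  have htu : t - u = t / A := by
    field_simp [hudef, hAdef]
    rw [hudef, sub_mul, div_mul_cancel₀ _ hA0.ne', hAdef]
    ring
  set f : ℝ → ℝ := fun s => min (γ * s ^ (-D / 2) * (t - s) ^ (α / 2 - 1))
      ((t - s) ^ (α / 2 - 1 - D / 2)) with hfdef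
  by_cases hInt : IntegrableOn f (Set.Ioc (0:ℝ) t) volume
  swap
  · rw [MeasureTheory.integral_undef hInt]
    positivity
  -- split the integral
  have hsplit : Set.Ioc (0:ℝ) t = Set.Ioc 0 u ∪ Set.Ioc u t :=
    (Set.Ioc_union_Ioc_eq_Ioc hu0.le hut.le).symm
  have hdisj : Disjoint (Set.Ioc (0:ℝ) u) (Set.Ioc u t) := Set.Ioc_disjoint_Ioc_of_le le_rfl
  have hI1 : IntegrableOn f (Set.Ioc (0:ℝ) u) volume :=
    hInt.mono_set (by rw [hsplit]; exact Set.subset_union_left)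
  have hI2 : IntegrableOn f (Set.Ioc u t) volume :=
    hInt.mono_set (by rw [hsplit]; exact Set.subset_union_right)
  have heq : ∫ s in Set.Ioc (0:ℝ) t, f s
      = (∫ s in Set.Ioc (0:ℝ) u, f s) + ∫ s in Set.Ioc u t, f s := by
    rw [hsplit]
    exact MeasureTheory.setIntegral_union hdisj measurableSet_Ioc hI1 hI2
  -- majorants
  set F1 : ℝ → ℝ := fun s => (t - s) ^ (α / 2 - 1 - D / 2) with hF1def
  set F2 : ℝ → ℝ := fun s => γ * u ^ (-D / 2) * (t - s) ^ (α / 2 - 1) with hF2def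
  have hF1int : IntegrableOn F1 (Set.Ioc (0:ℝ) u) volume := by
    have hc : ContinuousOn F1 (Set.Icc (0:ℝ) u) := by
      apply ContinuousOn.rpow_const (by fun_prop)
      intro s hs
      left
      have := hs.2
      have : 0 < t - s := by linarith [hs.2]
      positivity
    exact (hc.integrableOn_Icc).mono_set Set.Ioc_subset_Icc_self
  have hF2core : IntervalIntegrable (fun s => (t - s) ^ (α / 2 - 1)) volume u t := by
    have h1 : IntervalIntegrable (fun x : ℝ => x ^ (α / 2 - 1)) volume (t - u) (t - t) :=
      intervalIntegral.intervalIntegrable_rpow' (by linarith)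
    simpa using h1.comp_sub_left t
  have hF2int : IntegrableOn F2 (Set.Ioc u t) volume := by
    have := (hF2core.1).const_mul (γ * u ^ (-D/2))
    simpa [hF2def, mul_assoc, IntegrableOn] using this
  -- bound each part
  have hb1 : (∫ s in Set.Ioc (0:ℝ) u, f s) ≤ ∫ s in Set.Ioc (0:ℝ) u, F1 s := by
    apply MeasureTheory.setIntegral_mono_on hI1 hF1int measurableSet_Ioc
    intro s _
    exact min_le_right _ _
  have hb2 : (∫ s in Set.Ioc u t, f s) ≤ ∫ s in Set.Ioc u t, F2 s := by
    apply MeasureTheory.setIntegral_mono_on hI2 hF2int measurableSet_Ioc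
    intro s hs
    refine le_trans (min_le_left _ _) ?_
    have hs1 : u ≤ s := hs.1.le
    have hsd : s ^ (-D / 2) ≤ u ^ (-D / 2) :=
      Real.rpow_le_rpow_of_nonpos hu0 hs1 (by linarith)
    have hts : 0 ≤ (t - s) ^ (α / 2 - 1) := by
      apply Real.rpow_nonneg
      linarith [hs.2]
    have := mul_le_mul_of_nonneg_right (mul_le_mul_of_nonneg_left hsd hγ.le) hts
    simpa [hF2def] using this
  -- compute the first integral
  have hval1 : (∫ s in Set.Ioc (0:ℝ) u, F1 s)
      ≤ 2 / (D - α) * (t - u) ^ (-(D - α) / 2) := by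
    have h0u : (0:ℝ) ≤ u := hu0.le
    have h1 : (∫ s in Set.Ioc (0:ℝ) u, F1 s) = ∫ s in (0:ℝ)..u, F1 s :=
      (intervalIntegral.integral_of_le h0u).symm
    have h2 : (∫ s in (0:ℝ)..u, F1 s)
        = ∫ x in (t - u)..(t - 0), x ^ (α / 2 - 1 - D / 2) :=
      intervalIntegral.integral_comp_sub_left (fun x => x ^ (α / 2 - 1 - D / 2)) t
    have hnot : (0:ℝ) ∉ Set.uIcc (t - u) (t - 0) := by
      rw [Set.uIcc_of_le (by linarith)]
      intro h
      exact absurd h.1 (by linarith)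
    have h3 : (∫ x in (t - u)..(t - 0), x ^ (α / 2 - 1 - D / 2))
        = ((t - 0) ^ (α / 2 - 1 - D / 2 + 1) - (t - u) ^ (α / 2 - 1 - D / 2 + 1))
            / (α / 2 - 1 - D / 2 + 1) := by
      rw [integral_rpow]
      right
      constructor
      · intro h
        have : α / 2 - 1 - D / 2 = -1 := h
        have : α = D := by linarith
        linarith
      · exact hnot
    rw [h1, h2, h3]
    have he : α / 2 - 1 - D / 2 + 1 = -(D - α) / 2 := by ring
    rw [he]
    rw [sub_zero]
    have htpos : 0 < t ^ (-(D - α) / 2) := Real.rpow_pos_of_pos ht _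
    have h4 : ∀ a b : ℝ, (a - b) / (-(D - α) / 2) = (b - a) * (2 / (D - α)) := by
      intro a b
      have hinv : (-(D - α) / 2)⁻¹ = -(2 / (D - α)) := by
        rw [neg_div, inv_neg, inv_div]
      rw [div_eq_mul_inv, hinv]
      ring
    rw [h4]
    have : ((t - u) ^ (-(D - α) / 2) - t ^ (-(D - α) / 2)) ≤ (t - u) ^ (-(D - α) / 2) := by
      linarith
    calc ((t - u) ^ (-(D - α) / 2) - t ^ (-(D - α) / 2)) * (2 / (D - α))
        ≤ (t - u) ^ (-(D - α) / 2) * (2 / (D - α)) := by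
          apply mul_le_mul_of_nonneg_right this
          positivity
      _ = 2 / (D - α) * (t - u) ^ (-(D - α) / 2) := by ring
  -- compute the second integral
  have hval2 : (∫ s in Set.Ioc u t, F2 s)
      = γ * u ^ (-D / 2) * ((t - u) ^ (α / 2) * (2 / α)) := by
    have h1 : (∫ s in Set.Ioc u t, F2 s) = ∫ s in u..t, F2 s :=
      (intervalIntegral.integral_of_le hut.le).symm
    rw [h1, hF2def]
    simp only [intervalIntegral.integral_const_mul]
    have h2 : (∫ s in u..t, (t - s) ^ (α / 2 - 1))
        = ∫ x in (t - t)..(t - u), x ^ (α / 2 - 1) :=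
      intervalIntegral.integral_comp_sub_left (fun x => x ^ (α / 2 - 1)) t
    rw [h2, sub_self, integral_rpow (Or.inl (by linarith))]
    have he : α / 2 - 1 + 1 = α / 2 := by ring
    rw [he, Real.zero_rpow (by positivity), sub_zero]
    congr 1
    rw [div_div_eq_mul_div, mul_div_assoc]
  -- algebra: rewrite the two bounds in terms of t and A
  have key1 : (t - u) ^ (-(D - α) / 2) = t ^ (-(D - α) / 2) * A ^ ((D - α) / 2) := by
    rw [htu, Real.div_rpow ht.le hA0.le,
      show -(D - α) / 2 = -((D - α) / 2) from by ring, Real.rpow_neg hA0.le, div_eq_mul_inv, inv_inv]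
  have hg : (γ ^ (2 / D)) ^ (D / 2) = γ := by
    rw [← Real.rpow_mul hγ.le, show 2 / D * (D / 2) = 1 from by
      field_simp, Real.rpow_one]
  have hu2 : u ^ (D / 2) = t ^ (D / 2) * γ / A ^ (D / 2) := by
    rw [hudef, Real.div_rpow (by positivity) hA0.le, Real.mul_rpow ht.le hγp.le, hg]
  have hum : u ^ (-D / 2) = (u ^ (D / 2))⁻¹ := by
    rw [show -D / 2 = -(D / 2) from by ring, Real.rpow_neg hu0.le]
  have ht1 : t ^ (-(D - α) / 2) = t ^ (α / 2) / t ^ (D / 2) := by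
    rw [← Real.rpow_sub ht]
    congr 1
    ring
  have hA1 : A ^ ((D - α) / 2) = A ^ (D / 2) / A ^ (α / 2) := by
    rw [← Real.rpow_sub hA0]
    congr 1
    ring
  have p1 : (0:ℝ) < t ^ (D / 2) := Real.rpow_pos_of_pos ht _
  have p3 : (0:ℝ) < A ^ (D / 2) := Real.rpow_pos_of_pos hA0 _
  have p4 : (0:ℝ) < A ^ (α / 2) := Real.rpow_pos_of_pos hA0 _
  have habs : ∀ a b c e g : ℝ, 0 < a → 0 < c → 0 < e → 0 < g →
      g * (a * g / c)⁻¹ * (b / e) = b / a * (c / e) := by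
    intro a b c e g ha hc he' hg'
    field_simp
  have key2 : γ * u ^ (-D / 2) * (t - u) ^ (α / 2)
      = t ^ (-(D - α) / 2) * A ^ ((D - α) / 2) := by
    rw [hum, hu2, htu, Real.div_rpow ht.le hA0.le, ht1, hA1]
    exact habs _ _ _ _ _ p1 p3 p4 hγ
  calc (∫ s in Set.Ioc (0:ℝ) t, f s)
      = (∫ s in Set.Ioc (0:ℝ) u, f s) + ∫ s in Set.Ioc u t, f s := heq
    _ ≤ 2 / (D - α) * (t - u) ^ (-(D - α) / 2)
        + γ * u ^ (-D / 2) * ((t - u) ^ (α / 2) * (2 / α)) := by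
        refine add_le_add (le_trans hb1 hval1) ?_
        rw [← hval2]
        exact hb2
    _ = (2 / (D - α) + 2 / α) * t ^ (-(D - α) / 2) * A ^ ((D - α) / 2) := by
        rw [key1]
        rw [show γ * u ^ (-D / 2) * ((t - u) ^ (α / 2) * (2 / α))
            = γ * u ^ (-D / 2) * (t - u) ^ (α / 2) * (2 / α) by ring, key2]
        ring
end

section
/- Let T > 0, M ≥ 0, and let f : [0, T] × ℝ^d → ℝ be a Borel function with |f(s, x)| ≤ M for all (s, x) and such that f(s, ·) is continuous on ℝ^d for every s ∈ [0, T]. Let x : [0, T] → ℝ^d be continuous, let x_j : [0, T] → ℝ^d (j = 1, 2, ...) be Borel functions with sup_{s ∈ [0, T]} |x_j(s) − x(s)| → 0 as j → ∞, and let κ_j : [0, T] → [0, T] be Borel functions with sup_{s ∈ [0, T]} |κ_j(s) − s| → 0 as j → ∞. Then sup_{t ∈ [0, T]} | ∫_0^t f(s, x_j(κ_j(s))) ds − ∫_0^t f(s, x(s)) ds | → 0 as j → ∞. In particular (taking κ_j(s) = s), sup_{t ∈ [0, T]} | ∫_0^t f(s, x_j(s)) ds − ∫_0^t f(s, x(s))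 ds | → 0. -/
open MeasureTheory Filter Topology

open MeasureTheory Filter Topology

lemma skorokhod_aux (d : ℕ) (T M : ℝ) (hT : 0 < T) (hM : 0 ≤ M)
    (f : ℝ → EuclideanSpace ℝ (Fin d) → ℝ)
    (hfmeas : Measurable (Function.uncurry f))
    (hfbdd : ∀ s x, |f s x| ≤ M)
    (hfcont : ∀ s ∈ Set.Icc (0 : ℝ) T, Continuous (f s))
    (x : ℝ → EuclideanSpace ℝ (Fin d))
    (hx : ContinuousOn x (Set.Icc 0 T))
    (y : ℕ → ℝ → EuclideanSpace ℝ (Fin d))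
    (hy : ∀ j, Measurable (y j))
    (hconv : ∀ s ∈ Set.Icc (0:ℝ) T, Tendsto (fun j => y j s) atTop (𝓝 (x s))) :
    TendstoUniformlyOn (fun j t => ∫ s in Set.Ioc (0:ℝ) t, f s (y j s))
      (fun t => ∫ s in Set.Ioc (0:ℝ) t, f s (x s)) atTop (Set.Icc 0 T) := by
  have hxae : AEMeasurable x (volume.restrict (Set.Icc (0:ℝ) T)) :=
    hx.aemeasurable measurableSet_Icc
  have hgae : AEMeasurable (fun s => f s (x s)) (volume.restrict (Set.Icc (0:ℝ) T)) :=
    hfmeas.comp_aemeasurable (aemeasurable_id.prodMk hxae)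
  have hgjmeas : ∀ j, Measurable (fun s => f s (y j s)) :=
    fun j => hfmeas.comp (measurable_id.prodMk (hy j))
  have hsub : ∀ t, t ≤ T → Set.Ioc (0:ℝ) t ⊆ Set.Icc 0 T :=
    fun t ht => (Set.Ioc_subset_Icc_self).trans (Set.Icc_subset_Icc_right ht)
  have hgae' : ∀ t, t ≤ T → AEMeasurable (fun s => f s (x s)) (volume.restrict (Set.Ioc (0:ℝ) t)) :=
    fun t ht => hgae.mono_measure (Measure.restrict_mono (hsub t ht) le_rfl)
  have hMint : ∀ t : ℝ, IntegrableOn (fun _ : ℝ => M) (Set.Ioc (0:ℝ) t) :=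
    fun t => integrableOn_const measure_Ioc_lt_top.ne
  have h2Mint : IntegrableOn (fun _ : ℝ => 2 * M) (Set.Ioc (0:ℝ) T) :=
    integrableOn_const measure_Ioc_lt_top.ne
  have hint : ∀ t, t ≤ T → IntegrableOn (fun s => f s (x s)) (Set.Ioc (0:ℝ) t) := by
    intro t ht
    refine Integrable.mono' (hMint t) ((hgae' t ht).aestronglyMeasurable) ?_
    exact Eventually.of_forall fun s => hfbdd s _
  have hintj : ∀ j t, t ≤ T → IntegrableOn (fun s => f s (y j s)) (Set.Ioc (0:ℝ) t) := by
    intro j t ht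
    refine Integrable.mono' (hMint t) ((hgjmeas j).aestronglyMeasurable) ?_
    exact Eventually.of_forall fun s => hfbdd s _
  have key : Tendsto (fun j => ∫ s in Set.Ioc (0:ℝ) T, |f s (y j s) - f s (x s)|)
      atTop (𝓝 (∫ s in Set.Ioc (0:ℝ) T, (0:ℝ))) := by
    apply tendsto_integral_of_dominated_convergence (fun _ => 2 * M)
    · intro j
      exact (((hgjmeas j).aemeasurable.sub (hgae' T le_rfl)).aestronglyMeasurable).norm
    · exact h2Mint
    · intro j
      refine Eventually.of_forall fun s => ?_
      rw [Real.norm_eq_abs, abs_abs]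
      calc |f s (y j s) - f s (x s)| ≤ |f s (y j s)| + |f s (x s)| := abs_sub _ _
        _ ≤ M + M := add_le_add (hfbdd _ _) (hfbdd _ _)
        _ = 2 * M := by ring
    · refine (ae_restrict_iff' measurableSet_Ioc).2 (Eventually.of_forall fun s hs => ?_)
      have hs' : s ∈ Set.Icc (0:ℝ) T := Set.Ioc_subset_Icc_self hs
      have h1 : Tendsto (fun j => f s (y j s)) atTop (𝓝 (f s (x s))) :=
        ((hfcont s hs').tendsto _).comp (hconv s hs')
      have := (h1.sub (tendsto_const_nhds (x := f s (x s)))).abs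
      simpa using this
  have key0 : Tendsto (fun j => ∫ s in Set.Ioc (0:ℝ) T, |f s (y j s) - f s (x s)|)
      atTop (𝓝 0) := by simpa using key
  rw [Metric.tendstoUniformlyOn_iff]
  intro ε hε
  filter_upwards [key0.eventually_lt_const hε] with j hj t ht
  rw [Real.dist_eq, ← integral_sub (hint t ht.2) (hintj j t ht.2)]
  calc |∫ s in Set.Ioc (0:ℝ) t, (f s (x s) - f s (y j s))|
      ≤ ∫ s in Set.Ioc (0:ℝ) t, |f s (x s) - f s (y j s)| := by
        simpa [Real.norm_eq_abs] using
          norm_integral_le_integral_norm (fun s => f s (x s) - f s (y j s))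
            (μ := volume.restrict (Set.Ioc (0:ℝ) t))
    _ = ∫ s in Set.Ioc (0:ℝ) t, |f s (y j s) - f s (x s)| := by
        simp_rw [abs_sub_comm]
    _ ≤ ∫ s in Set.Ioc (0:ℝ) T, |f s (y j s) - f s (x s)| := by
        apply setIntegral_mono_set
        · exact ((hintj j T le_rfl).sub (hint T le_rfl)).abs
        · exact Eventually.of_forall fun s => abs_nonneg _
        · exact HasSubset.Subset.eventuallyLE (Set.Ioc_subset_Ioc_right ht.2)
    _ < ε := hj


/-- The deterministic part of Lemma 3.1 (an adaptation of a result of Skorokhod):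
if `f` is bounded Borel, continuous in the space variable, `x_j → x` uniformly on
`[0, T]` and `κ_j → id` uniformly on `[0, T]`, then
`∫_0^t f(s, x_j(κ_j(s))) ds → ∫_0^t f(s, x(s)) ds` uniformly in `t ∈ [0, T]`;
in particular (taking `κ_j(s) = s`),
`∫_0^t f(s, x_j(s)) ds → ∫_0^t f(s, x(s)) ds` uniformly in `t ∈ [0, T]`. -/
theorem stmt_14 (d : ℕ) (hd : 1 ≤ d) (T M : ℝ) (hT : 0 < T) (hM : 0 ≤ M)
    (f : ℝ → EuclideanSpace ℝ (Fin d) → ℝ)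
    (hfmeas : Measurable (Function.uncurry f))
    (hfbdd : ∀ s x, |f s x| ≤ M)
    (hfcont : ∀ s ∈ Set.Icc (0 : ℝ) T, Continuous (f s))
    (x : ℝ → EuclideanSpace ℝ (Fin d))
    (hx : ContinuousOn x (Set.Icc 0 T))
    (xj : ℕ → ℝ → EuclideanSpace ℝ (Fin d))
    (hxj : ∀ j, Measurable (xj j))
    (κ : ℕ → ℝ → ℝ)
    (hκ : ∀ j, Measurable (κ j))
    (hκrange : ∀ j, ∀ s ∈ Set.Icc (0 : ℝ) T, κ j s ∈ Set.Icc (0 : ℝ) T)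
    (hxconv : TendstoUniformlyOn (fun j => xj j) x atTop (Set.Icc 0 T))
    (hκconv : TendstoUniformlyOn (fun j => κ j) id atTop (Set.Icc 0 T)) :
    TendstoUniformlyOn
      (fun j t => ∫ s in Set.Ioc (0 : ℝ) t, f s (xj j (κ j s)))
      (fun t => ∫ s in Set.Ioc (0 : ℝ) t, f s (x s))
      atTop (Set.Icc 0 T) ∧
    TendstoUniformlyOn
      (fun j t => ∫ s in Set.Ioc (0 : ℝ) t, f s (xj j s))
      (fun t => ∫ s in Set.Ioc (0 : ℝ) t, f s (x s))
      atTop (Set.Icc 0 T) := by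
  have hconv2 : ∀ s ∈ Set.Icc (0:ℝ) T, Tendsto (fun j => xj j s) atTop (𝓝 (x s)) :=
    fun s hs => hxconv.tendsto_at hs
  have hconv1 : ∀ s ∈ Set.Icc (0:ℝ) T,
      Tendsto (fun j => xj j (κ j s)) atTop (𝓝 (x s)) := by
    intro s hs
    have hκs : Tendsto (fun j => κ j s) atTop (𝓝 s) := hκconv.tendsto_at hs
    have hκs' : Tendsto (fun j => κ j s) atTop (𝓝[Set.Icc (0:ℝ) T] s) :=
      tendsto_nhdsWithin_of_tendsto_nhds_of_eventually_within _ hκs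
        (Eventually.of_forall fun j => hκrange j s hs)
    have hb : Tendsto (fun j => x (κ j s)) atTop (𝓝 (x s)) := Filter.Tendsto.comp (hx s hs) hκs'
    have ha : Tendsto (fun j => dist (xj j (κ j s)) (x (κ j s))) atTop (𝓝 0) := by
      refine Metric.tendsto_nhds.2 fun ε hε => ?_
      filter_upwards [(Metric.tendstoUniformlyOn_iff.1 hxconv) ε hε] with j hj
      have h := hj (κ j s) (hκrange j s hs)
      rw [dist_comm] at h
      simpa [Real.dist_eq, abs_of_nonneg dist_nonneg] using h
    refine tendsto_iff_dist_tendsto_zero.2 ?_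
    have hb' : Tendsto (fun j => dist (x (κ j s)) (x s)) atTop (𝓝 0) :=
      tendsto_iff_dist_tendsto_zero.1 hb
    refine squeeze_zero (fun j => dist_nonneg)
      (fun j => dist_triangle (xj j (κ j s)) (x (κ j s)) (x s)) ?_
    simpa using ha.add hb'
  exact ⟨skorokhod_aux d T M hT hM f hfmeas hfbdd hfcont x hx
      (fun j s => xj j (κ j s)) (fun j => (hxj j).comp (hκ j)) hconv1,
    skorokhod_aux d T M hT hM f hfmeas hfbdd hfcont x hx xj hxj hconv2⟩
end
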